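/- Let X be a crossed double category in which every square is opcartesian. Then every 2-cell β : (e,m) ⇒ (e',m') between corners is vertically invertible; in particular, two corners are equivalent in Cnr(X) if and only if there exists a single (vertically invertible) 2-cell between them. -/
import Mathlib


open CategoryTheory

universe u

namespace Paper

/-- A (strict) double category, presented elementarily: objects, vertical morphisms,
horizontal morphisms and squares, with vertical and horizontal compositions of squares. -/
structure DblCat : Type (u + 1) where
  Obj : Type u
  Ver : Obj → Obj → Type u
  Hor : Obj → Obj → Type u
  vId : ∀ a, Ver a a
  vComp : ∀ {a b c}, Ver a b → Ver b c → Ver a c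
  hId : ∀ a, Hor a a
  hComp : ∀ {a b c}, Hor a b → Hor b c → Hor a c
  vId_comp : ∀ {a b} (f : Ver a b), vComp (vId a) f = f
  vComp_id : ∀ {a b} (f : Ver a b), vComp f (vId b) = f
  vAssoc : ∀ {a b c d} (f : Ver a b) (g : Ver b c) (h : Ver c d),
    vComp (vComp f g) h = vComp f (vComp g h)
  hId_comp : ∀ {a b} (f : Hor a b), hComp (hId a) f = f
  hComp_id : ∀ {a b} (f : Hor a b), hComp f (hId b) = f
  hAssoc : ∀ {a b c d} (f : Hor a b) (g : Hor b c) (h : Hor c d),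
    hComp (hComp f g) h = hComp f (hComp g h)
  /-- squares, indexed by top, left, right, bottom boundary -/
  Sq : ∀ {a b c d}, Hor a b → Ver a c → Ver b d → Hor c d → Type u
  vSq : ∀ {a b c d e f : Obj} {t : Hor a b} {l : Ver a c} {r : Ver b d} {m : Hor c d}
    {l' : Ver c e} {r' : Ver d f} {bo : Hor e f},
    Sq t l r m → Sq m l' r' bo → Sq t (vComp l l') (vComp r r') bo
  hSq : ∀ {a b c a' b' c' : Obj} {t1 : Hor a b} {t2 : Hor b c} {l : Ver a a'} {m : Ver b b'}
    {r : Ver c c'} {b1 : Hor a' b'} {b2 : Hor b' c'},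
    Sq t1 l m b1 → Sq t2 m r b2 → Sq (hComp t1 t2) l r (hComp b1 b2)
  vIdSq : ∀ {a b} (g : Hor a b), Sq g (vId a) (vId b) g
  hIdSq : ∀ {a b} (u : Ver a b), Sq (hId a) u u (hId b)
  vSq_id_comp : ∀ {a b c d} {t : Hor a b} {l : Ver a c} {r : Ver b d} {bo : Hor c d}
    (α : Sq t l r bo), HEq (vSq (vIdSq t) α) α
  vSq_comp_id : ∀ {a b c d} {t : Hor a b} {l : Ver a c} {r : Ver b d} {bo : Hor c d}
    (α : Sq t l r bo), HEq (vSq α (vIdSq bo)) α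
  vSq_assoc : ∀ {a b c d e f g h : Obj} {t : Hor a b} {l : Ver a c} {r : Ver b d}
    {m1 : Hor c d} {l' : Ver c e} {r' : Ver d f} {m2 : Hor e f}
    {l'' : Ver e g} {r'' : Ver f h} {bo : Hor g h}
    (α : Sq t l r m1) (β : Sq m1 l' r' m2) (γ : Sq m2 l'' r'' bo),
    HEq (vSq (vSq α β) γ) (vSq α (vSq β γ))
  hSq_id_comp : ∀ {a b c d} {t : Hor a b} {l : Ver a c} {r : Ver b d} {bo : Hor c d}
    (α : Sq t l r bo), HEq (hSq (hIdSq l) α) α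
  hSq_comp_id : ∀ {a b c d} {t : Hor a b} {l : Ver a c} {r : Ver b d} {bo : Hor c d}
    (α : Sq t l r bo), HEq (hSq α (hIdSq r)) α
  hSq_assoc : ∀ {a b c d a' b' c' d' : Obj} {t1 : Hor a b} {t2 : Hor b c} {t3 : Hor c d}
    {l : Ver a a'} {m1 : Ver b b'} {m2 : Ver c c'} {r : Ver d d'}
    {b1 : Hor a' b'} {b2 : Hor b' c'} {b3 : Hor c' d'}
    (α : Sq t1 l m1 b1) (β : Sq t2 m1 m2 b2) (γ : Sq t3 m2 r b3),
    HEq (hSq (hSq α β) γ) (hSq α (hSq β γ))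
  interchange : ∀ {a b c a' b' c' a'' b'' c'' : Obj}
    {t1 : Hor a b} {t2 : Hor b c} {l : Ver a a'} {m : Ver b b'} {r : Ver c c'}
    {b1 : Hor a' b'} {b2 : Hor b' c'}
    {l' : Ver a' a''} {m' : Ver b' b''} {r' : Ver c' c''}
    {c1 : Hor a'' b''} {c2 : Hor b'' c''}
    (α : Sq t1 l m b1) (γ : Sq t2 m r b2) (β : Sq b1 l' m' c1) (δ : Sq b2 m' r' c2),
    hSq (vSq α β) (vSq γ δ) = vSq (hSq α γ) (hSq β δ)
  vIdSq_hId : ∀ a, vIdSq (hId a) = hIdSq (vId a)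
  vIdSq_hComp : ∀ {a b c} (g : Hor a b) (h : Hor b c),
    vIdSq (hComp g h) = hSq (vIdSq g) (vIdSq h)
  hIdSq_vComp : ∀ {a b c} (u : Ver a b) (v : Ver b c),
    hIdSq (vComp u v) = vSq (hIdSq u) (hIdSq v)

namespace DblCat

variable (X : DblCat.{u})

/-- A square `κ` (with top `g`, left `l`, right `u`, bottom `bo`) is opcartesian
(with respect to the codomain functor `d₀ : X₁ → X₀`). -/
def Opcart {a b bh c : X.Obj} {g : X.Hor a b} {l : X.Ver a bh} {u : X.Ver b c}
    {bo : X.Hor bh c} (κ : X.Sq g l u bo) : Prop :=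
  ∀ {d e : X.Obj} (w : X.Ver a d) (v : X.Ver c e) (h : X.Hor d e)
    (α : X.Sq g w (X.vComp u v) h),
    ∃! p : Σ' θ : X.Ver bh d, X.Sq bo θ v h,
      X.vComp l p.1 = w ∧ HEq (X.vSq κ p.2) α

/-- A crossed double category: every top-right corner has an opcartesian filler,
horizontal identity squares are opcartesian, and opcartesian squares are closed under
horizontal composition. -/
def Crossed : Prop :=
  (∀ {a b c : X.Obj} (g : X.Hor a b) (u : X.Ver b c),
      ∃ (bh : X.Obj) (l : X.Ver a bh) (bo : X.Hor bh c) (κ : X.Sq g l u bo), X.Opcart κ) ∧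
  (∀ {a b : X.Obj} (u : X.Ver a b), X.Opcart (X.hIdSq u)) ∧
  (∀ {a b c a' b' c' : X.Obj} {t1 : X.Hor a b} {t2 : X.Hor b c} {l : X.Ver a a'}
      {m : X.Ver b b'} {r : X.Ver c c'} {b1 : X.Hor a' b'} {b2 : X.Hor b' c'}
      (κ1 : X.Sq t1 l m b1) (κ2 : X.Sq t2 m r b2),
      X.Opcart κ1 → X.Opcart κ2 → X.Opcart (X.hSq κ1 κ2))

/-- Opcartesian in `X* = ((Xᵛ)ʰ)ᵀ`, expressed elementarily in `X`. -/
def Opcart2 {a b bh c : X.Obj} {g : X.Hor a b} {l : X.Ver a bh} {u : X.Ver b c}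
    {bo : X.Hor bh c} (κ : X.Sq g l u bo) : Prop :=
  ∀ {e : X.Obj} (w : X.Ver a e) (k : X.Hor e c) (α : X.Sq g w u k),
    ∃! p : Σ' ψ : X.Hor e bh, X.Sq (X.hId a) w l ψ,
      HEq (X.hSq p.2 κ) α

/-- Bicartesian squares: opcartesian in both `X` and `X*`. -/
def Bicart {a b bh c : X.Obj} {g : X.Hor a b} {l : X.Ver a bh} {u : X.Ver b c}
    {bo : X.Hor bh c} (κ : X.Sq g l u bo) : Prop :=
  X.Opcart κ ∧ X.Opcart2 κ

/-- Top-right bicrossed double category. -/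
def TopRightBicrossed : Prop :=
  (∀ {a b c : X.Obj} (g : X.Hor a b) (u : X.Ver b c),
      ∃ (bh : X.Obj) (l : X.Ver a bh) (bo : X.Hor bh c) (κ : X.Sq g l u bo), X.Bicart κ) ∧
  (∀ {a b : X.Obj} (u : X.Ver a b), X.Bicart (X.hIdSq u)) ∧
  (∀ {a b : X.Obj} (g : X.Hor a b), X.Bicart (X.vIdSq g)) ∧
  (∀ {a b c a' b' c' : X.Obj} {t1 : X.Hor a b} {t2 : X.Hor b c} {l : X.Ver a a'}
      {m : X.Ver b b'} {r : X.Ver c c'} {b1 : X.Hor a' b'} {b2 : X.Hor b' c'}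
      (κ1 : X.Sq t1 l m b1) (κ2 : X.Sq t2 m r b2),
      X.Bicart κ1 → X.Bicart κ2 → X.Bicart (X.hSq κ1 κ2)) ∧
  (∀ {a b c d e f : X.Obj} {t : X.Hor a b} {l : X.Ver a c} {r : X.Ver b d} {m : X.Hor c d}
      {l' : X.Ver c e} {r' : X.Ver d f} {bo : X.Hor e f}
      (κ1 : X.Sq t l r m) (κ2 : X.Sq m l' r' bo),
      X.Bicart κ1 → X.Bicart κ2 → X.Bicart (X.vSq κ1 κ2))

/-- Codomain-discrete double category: every top-right corner fills into a unique square. -/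
def CodDiscrete : Prop :=
  ∀ {a b c : X.Obj} (g : X.Hor a b) (u : X.Ver b c),
    ∃! p : Σ' (bh : X.Obj) (l : X.Ver a bh) (bo : X.Hor bh c), X.Sq g l u bo, True

/-- Every top-right corner can be filled into (at least) one square. -/
def CornerFill : Prop :=
  ∀ {a b c : X.Obj} (g : X.Hor a b) (u : X.Ver b c),
    ∃ (bh : X.Obj) (l : X.Ver a bh) (bo : X.Hor bh c), Nonempty (X.Sq g l u bo)

def AllOpcart : Prop :=
  ∀ {a b c d : X.Obj} {t : X.Hor a b} {l : X.Ver a c} {r : X.Ver b d} {bo : X.Hor c d}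
    (κ : X.Sq t l r bo), X.Opcart κ

def AllBicart : Prop :=
  ∀ {a b c d : X.Obj} {t : X.Hor a b} {l : X.Ver a c} {r : X.Ver b d} {bo : X.Hor c d}
    (κ : X.Sq t l r bo), X.Bicart κ

def HIso {a b : X.Obj} (g : X.Hor a b) : Prop :=
  ∃ g' : X.Hor b a, X.hComp g g' = X.hId a ∧ X.hComp g' g = X.hId b

def VIso {a b : X.Obj} (u : X.Ver a b) : Prop :=
  ∃ u' : X.Ver b a, X.vComp u u' = X.vId a ∧ X.vComp u' u = X.vId b

/-- Strict horizontal invariance. -/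
def HorInvariant : Prop :=
  ∀ {a b c d : X.Obj} (g : X.Hor a b) (h : X.Hor c d) (u : X.Ver b d),
    X.HIso g → X.HIso h → ∃! _p : Σ' w : X.Ver a c, X.Sq g w u h, True

/-- Strict vertical invariance. -/
def VerInvariant : Prop :=
  ∀ {a b c d : X.Obj} (g : X.Hor a b) (u : X.Ver a c) (v : X.Ver b d),
    X.VIso u → X.VIso v → ∃! _p : Σ' h : X.Hor c d, X.Sq g u v h, True

def Invariant : Prop := X.HorInvariant ∧ X.VerInvariant

/-- The top-left corner `(π₁, π₂)` of the vertical dual `Xᵛ`, expressed in `X`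
(`π₁ : a → a'` vertical in `X`, `π₂ : a' → b` horizontal), is jointly monic. -/
def JMonicVDual {a a' b : X.Obj} (π₁ : X.Ver a a') (π₂ : X.Hor a' b) : Prop :=
  ∀ {a'' : X.Obj} (θ θ' : X.Ver a' a'') (ψ ψ' : X.Hor a'' a')
    (_κ1 : X.Sq (X.hId a') θ (X.vId a') ψ) (_κ2 : X.Sq (X.hId a') θ' (X.vId a') ψ'),
    X.vComp π₁ θ = X.vComp π₁ θ' → X.hComp ψ π₂ = X.hComp ψ' π₂ → θ = θ' ∧ ψ = ψ'

/-- Factorization double category. -/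
def IsFactDbl : Prop :=
  X.Invariant ∧ X.CornerFill ∧ X.AllBicart ∧
  (∀ {a a' b : X.Obj} (π₁ : X.Ver a a') (π₂ : X.Hor a' b), X.JMonicVDual π₁ π₂)

/-- A corner from `a` to `b`: a vertical morphism followed by a horizontal one. -/
structure Corner (a b : X.Obj) : Type u where
  mid : X.Obj
  v : X.Ver a mid
  h : X.Hor mid b

/-- A 2-cell between corners. -/
def CellRel {a b : X.Obj} (c1 c2 : X.Corner a b) : Prop :=
  ∃ (θ : X.Ver c1.mid c2.mid) (_β : X.Sq c1.h θ (X.vId b) c2.h), X.vComp c1.v θ = c2.v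

/-- Morphisms of the category of corners: corners modulo zigzags of 2-cells. -/
def CnrHom (a b : X.Obj) : Type u := Quot (fun c1 c2 : X.Corner a b => X.CellRel c1 c2)

def mkCnr {a b : X.Obj} (c : X.Corner a b) : X.CnrHom a b := Quot.mk _ c

/-- The vertical corner `[u, 1]`. -/
def mkE {a b : X.Obj} (u : X.Ver a b) : X.CnrHom a b := X.mkCnr ⟨b, u, X.hId b⟩

/-- The horizontal corner `[1, g]`. -/
def mkM {a b : X.Obj} (g : X.Hor a b) : X.CnrHom a b := X.mkCnr ⟨a, X.vId a, g⟩

/-- The identity corner `[1ₐ, 1ₐ]`. -/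
def cnrId (a : X.Obj) : X.CnrHom a a := X.mkCnr ⟨a, X.vId a, X.hId a⟩

/-- A composition operation on corners which is computed by filling the middle
corner with (any) opcartesian square. -/
structure CnrStruct (X : DblCat.{u}) where
  comp : ∀ {a b c : X.Obj}, X.CnrHom a b → X.CnrHom b c → X.CnrHom a c
  compat : ∀ {a m1 b m2 c bh : X.Obj} (u : X.Ver a m1) (g : X.Hor m1 b)
    (v : X.Ver b m2) (h : X.Hor m2 c)
    (w : X.Ver m1 bh) (bo : X.Hor bh m2) (κ : X.Sq g w v bo), X.Opcart κ →
    comp (X.mkCnr ⟨m1, u, g⟩) (X.mkCnr ⟨m2, v, h⟩) =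
      X.mkCnr ⟨bh, X.vComp u w, X.hComp bo h⟩

/-- The category of corners: a corner composition which is unital and associative. -/
structure CnrCat (X : DblCat.{u}) extends CnrStruct X where
  id_comp : ∀ {a b : X.Obj} (f : X.CnrHom a b), comp (X.cnrId a) f = f
  comp_id : ∀ {a b : X.Obj} (f : X.CnrHom a b), comp f (X.cnrId b) = f
  assoc : ∀ {a b c d : X.Obj} (f : X.CnrHom a b) (g : X.CnrHom b c) (h : X.CnrHom c d),
    comp (comp f g) h = comp f (comp g h)

/-- The class `E_X` of vertical corners. -/
def InE {a b : X.Obj} (f : X.CnrHom a b) : Prop := ∃ u : X.Ver a b, f = X.mkE u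

/-- The class `M_X` of horizontal corners. -/
def InM {a b : X.Obj} (f : X.CnrHom a b) : Prop := ∃ g : X.Hor a b, f = X.mkM g

/-- Isomorphisms in the category of corners. -/
def CnrIso (c : CnrStruct X) {a b : X.Obj} (f : X.CnrHom a b) : Prop :=
  ∃ g : X.CnrHom b a, c.comp f g = X.cnrId a ∧ c.comp g f = X.cnrId b

end DblCat

end Paper

namespace Paper

namespace DblCat

variable (X : DblCat.{u})

/-- Cast a square along equalities of its vertical edges. -/
def castSq {a b c d : X.Obj} {t : X.Hor a b} {l l' : X.Ver a c} {r r' : X.Ver b d}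
    {bo : X.Hor c d} (hl : l = l') (hr : r = r') (s : X.Sq t l r bo) : X.Sq t l' r' bo := by
  subst hl; subst hr; exact s

theorem castSq_heq {a b c d : X.Obj} {t : X.Hor a b} {l l' : X.Ver a c} {r r' : X.Ver b d}
    {bo : X.Hor c d} (hl : l = l') (hr : r = r') (s : X.Sq t l r bo) :
    HEq (X.castSq hl hr s) s := by
  subst hl; subst hr; rfl

theorem vSq_congr {a b c d e f : X.Obj} {t : X.Hor a b} {l1 l1' : X.Ver a c}
    {r1 r1' : X.Ver b d} {m : X.Hor c d} {l2 l2' : X.Ver c e} {r2 r2' : X.Ver d f}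
    {bo : X.Hor e f} (hl1 : l1 = l1') (hr1 : r1 = r1') (hl2 : l2 = l2') (hr2 : r2 = r2')
    {s1 : X.Sq t l1 r1 m} {s1' : X.Sq t l1' r1' m} {s2 : X.Sq m l2 r2 bo}
    {s2' : X.Sq m l2' r2' bo} (h1 : HEq s1 s1') (h2 : HEq s2 s2') :
    HEq (X.vSq s1 s2) (X.vSq s1' s2') := by
  subst hl1; subst hr1; subst hl2; subst hr2
  cases h1; cases h2; rfl

theorem inv_cell (hop : X.AllOpcart) {x y b : X.Obj} (m : X.Hor x b) (m' : X.Hor y b)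
    (θ : X.Ver x y) (β : X.Sq m θ (X.vId b) m') :
    ∃ (θ' : X.Ver y x) (γ : X.Sq m' θ' (X.vId b) m),
      X.vComp θ θ' = X.vId x ∧ X.vComp θ' θ = X.vId y ∧
      HEq (X.vSq β γ) (X.vIdSq m) ∧ HEq (X.vSq γ β) (X.vIdSq m') := by
  -- Step 1: use opcartesianness of β against the identity square on m
  obtain ⟨⟨θ', γ⟩, ⟨hc1, hc2⟩, -⟩ :=
    hop β (X.vId x) (X.vId b) m
      (X.castSq rfl (X.vId_comp (X.vId b)).symm (X.vIdSq m))
  have hβγ : HEq (X.vSq β γ) (X.vIdSq m) :=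
    hc2.trans (X.castSq_heq rfl (X.vId_comp (X.vId b)).symm (X.vIdSq m))
  -- Step 2: uniqueness against β itself
  obtain ⟨p0, -, hun⟩ :=
    hop β θ (X.vId b) m' (X.castSq rfl (X.vId_comp (X.vId b)).symm β)
  have ha := hun (⟨X.vId y, X.vIdSq m'⟩ : Σ' θ'' : X.Ver y y, X.Sq m' θ'' (X.vId b) m')
    ⟨X.vComp_id θ,
      (X.vSq_comp_id β).trans (X.castSq_heq rfl (X.vId_comp (X.vId b)).symm β).symm⟩
  have hb := hun
    (⟨X.vComp θ' θ, X.castSq rfl (X.vId_comp (X.vId b)) (X.vSq γ β)⟩ :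
      Σ' θ'' : X.Ver y y, X.Sq m' θ'' (X.vId b) m')
    ⟨by rw [← X.vAssoc, hc1, X.vId_comp],
      by
        refine HEq.trans ?_ ((X.castSq_heq rfl (X.vId_comp (X.vId b)).symm β).symm)
        refine HEq.trans
          (X.vSq_congr rfl rfl rfl (X.vId_comp (X.vId b)).symm HEq.rfl
            (X.castSq_heq rfl (X.vId_comp (X.vId b)) (X.vSq γ β))) ?_
        refine HEq.trans (X.vSq_assoc β γ β).symm ?_
        refine HEq.trans
          (X.vSq_congr hc1 (X.vId_comp (X.vId b)) rfl rfl hβγ HEq.rfl) ?_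
        exact X.vSq_id_comp β⟩
  have heq : (⟨X.vComp θ' θ, X.castSq rfl (X.vId_comp (X.vId b)) (X.vSq γ β)⟩ :
      Σ' θ'' : X.Ver y y, X.Sq m' θ'' (X.vId b) m') = ⟨X.vId y, X.vIdSq m'⟩ :=
    hb.trans ha.symm
  have e1 : X.vComp θ' θ = X.vId y := congrArg PSigma.fst heq
  have e2 := congr_arg_heq PSigma.snd heq
  exact ⟨θ', γ, hc1, e1, hβγ,
    ((X.castSq_heq rfl (X.vId_comp (X.vId b)) (X.vSq γ β)).symm.trans e2)⟩

theorem cellRel_refl {a b : X.Obj} (c : X.Corner a b) : X.CellRel c c :=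
  ⟨X.vId c.mid, X.vIdSq c.h, X.vComp_id c.v⟩

theorem cellRel_symm (hop : X.AllOpcart) {a b : X.Obj} {c1 c2 : X.Corner a b}
    (h : X.CellRel c1 c2) : X.CellRel c2 c1 := by
  obtain ⟨θ, β, he⟩ := h
  obtain ⟨θ', γ, h1, -, -, -⟩ := X.inv_cell hop c1.h c2.h θ β
  exact ⟨θ', γ, by rw [← he, X.vAssoc, h1, X.vComp_id]⟩

theorem cellRel_trans {a b : X.Obj} {c1 c2 c3 : X.Corner a b}
    (h : X.CellRel c1 c2) (h' : X.CellRel c2 c3) : X.CellRel c1 c3 := by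
  obtain ⟨θ1, β1, he1⟩ := h
  obtain ⟨θ2, β2, he2⟩ := h'
  exact ⟨X.vComp θ1 θ2, X.castSq rfl (X.vId_comp (X.vId b)) (X.vSq β1 β2),
    by rw [← X.vAssoc, he1, he2]⟩

end DblCat

open DblCat in
/-- In a crossed double category in which every square is opcartesian,
every 2-cell between corners is vertically invertible; in particular two corners are
equivalent (i.e. equal in `Cnr X`) iff there is a single (vertically invertible) 2-cell
between them. -/
theorem statement2 (X : DblCat.{u}) (hX : X.Crossed) (hop : X.AllOpcart) :
    (∀ {a x y b : X.Obj} (e : X.Ver a x) (m : X.Hor x b) (e' : X.Ver a y) (m' : X.Hor y b)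
      (θ : X.Ver x y) (β : X.Sq m θ (X.vId b) m'), X.vComp e θ = e' →
      ∃ (θ' : X.Ver y x) (γ : X.Sq m' θ' (X.vId b) m),
        X.vComp θ θ' = X.vId x ∧ X.vComp θ' θ = X.vId y ∧
        HEq (X.vSq β γ) (X.vIdSq m) ∧ HEq (X.vSq γ β) (X.vIdSq m')) ∧
    (∀ {a b : X.Obj} (c1 c2 : X.Corner a b),
      X.mkCnr c1 = X.mkCnr c2 ↔ X.CellRel c1 c2) := by
  constructor
  · intro a x y b e m e' m' θ β _
    exact X.inv_cell hop m m' θ β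
  · intro a b c1 c2
    constructor
    · intro h
      have h' : Quot.mk (fun c1 c2 : X.Corner a b => X.CellRel c1 c2) c1 =
          Quot.mk _ c2 := h
      have hg := Quot.eq.mp h'
      clear h h'
      induction hg with
      | rel _ _ hr => exact hr
      | refl => exact X.cellRel_refl _
      | symm _ _ _ ih => exact X.cellRel_symm hop ih
      | trans _ _ _ _ _ ih1 ih2 => exact X.cellRel_trans ih1 ih2
    · exact Quot.sound

end Paper
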